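/- arXiv:1506.02589 — 4 statements merged into one kernel-verified Lean document; each statement's English description precedes it below -/
import Mathlib

section
/- Let G ⊆ ℝ × ℝⁿ be open, W : G → ℝⁿ continuous, and V ⊆ ℝⁿ closed. Suppose the ODE dy/dt = W(t, y) has a global uniqueness of solutions property in G \ (ℝ × V), and suppose there exist a constant C > 0 and a neighbourhood U ⊆ G of (ℝ × V) ∩ G such that |W(t, x)| ≤ C · dist(x, V) for all (t, x) ∈ U. Then the ODE dy/dt = W(t, y) has a global uniqueness of solutions property in all of G. -/
open Metric Set

/-- `y` is a solution of `y' = W(t, y)` on the open interval `(a, b)` with graph in `S`. -/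
def IsSolOn {n : ℕ} (W : ℝ × (Fin n → ℝ) → (Fin n → ℝ)) (S : Set (ℝ × (Fin n → ℝ)))
    (y : ℝ → Fin n → ℝ) (a b : ℝ) : Prop :=
  ∀ t ∈ Ioo a b, (t, y t) ∈ S ∧ HasDerivAt y (W (t, y t)) t

/-- The ODE `y' = W(t, y)` has the global uniqueness of solutions property in `S`: any two
solutions with graphs in `S`, defined on a common interval, that agree at one time agree
everywhere on that interval. -/
def GlobalUniqueness {n : ℕ} (W : ℝ × (Fin n → ℝ) → (Fin n → ℝ))
    (S : Set (ℝ × (Fin n → ℝ))) : Prop :=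
  ∀ (a b : ℝ) (y₁ y₂ : ℝ → Fin n → ℝ), IsSolOn W S y₁ a b → IsSolOn W S y₂ a b →
    ∀ t₀ ∈ Ioo a b, y₁ t₀ = y₂ t₀ → ∀ t ∈ Ioo a b, y₁ t = y₂ t

/-! Near `ℝ × V` the bound `‖W(t, x)‖ ≤ C · dist(x, V) ≤ C · ‖x - y(t₀)‖` lets Grönwall's
inequality freeze a solution that touches `V` at time `t₀`, and since the interval is connected it
then stays at `y(t₀)` for its whole life. Hence two solutions that agree at a point of `V` are the
same constant, while two solutions that agree off `V` never meet `V` and fall under the uniqueness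
hypothesis on `G \ (ℝ × V)`. -/

open Filter Topology

section Gronwall

variable {E : Type*} [NormedAddCommGroup E] [NormedSpace ℝ E]

theorem eq_zero_of_norm_deriv_le_mul_norm_of_eq_zero {f f' : ℝ → E} {K a b t₀ : ℝ}
    (hf : ∀ x ∈ Icc a b, HasDerivAt f (f' x) x) (bound : ∀ x ∈ Icc a b, ‖f' x‖ ≤ K * ‖f x‖)
    (ht₀ : t₀ ∈ Icc a b) (hf₀ : f t₀ = 0) : ∀ x ∈ Icc a b, f x = 0 := by
  have right : ∀ x ∈ Icc t₀ b, f x = 0 := by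
    have sub : Icc t₀ b ⊆ Icc a b := Icc_subset_Icc_left ht₀.1
    exact eq_zero_of_abs_deriv_le_mul_abs_self_of_eq_zero_right
      (fun x hx => (hf x (sub hx)).continuousAt.continuousWithinAt)
      (fun x hx => (hf x (sub (Ico_subset_Icc_self hx))).hasDerivWithinAt) hf₀
      (fun x hx => bound x (sub (Ico_subset_Icc_self hx)))
  have left : ∀ x ∈ Icc (-t₀) (-a), f (-x) = 0 := by
    have sub : ∀ x ∈ Icc (-t₀) (-a), -x ∈ Icc a b := fun x hx =>
      ⟨le_neg_of_le_neg hx.2, (neg_le.mp hx.1).trans ht₀.2⟩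
    have hderiv : ∀ x ∈ Icc (-t₀) (-a), HasDerivAt (fun x => f (-x)) (-f' (-x)) x := fun x hx => by
      simpa [Function.comp_def] using (hf (-x) (sub x hx)).scomp x (hasDerivAt_neg x)
    exact eq_zero_of_abs_deriv_le_mul_abs_self_of_eq_zero_right
      (fun x hx => (hderiv x hx).continuousAt.continuousWithinAt)
      (fun x hx => (hderiv x (Ico_subset_Icc_self hx)).hasDerivWithinAt) (by simpa using hf₀)
      (fun x hx => by simpa using bound (-x) (sub x (Ico_subset_Icc_self hx)))
  intro x hx
  rcases le_total t₀ x with h | h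
  · exact right x ⟨h, hx.2⟩
  · simpa using left (-x) ⟨neg_le_neg h, neg_le_neg hx.1⟩

theorem eventually_eq_of_norm_deriv_le_mul_infDist {y y' : ℝ → E} {V : Set E} {K t : ℝ}
    (hK : 0 ≤ K) (hy : ∀ᶠ s in 𝓝 t, HasDerivAt y (y' s) s)
    (bound : ∀ᶠ s in 𝓝 t, ‖y' s‖ ≤ K * infDist (y s) V) (ht : y t ∈ V) :
    ∀ᶠ s in 𝓝 t, y s = y t := by
  obtain ⟨δ, hδ, hball⟩ := Metric.eventually_nhds_iff_ball.mp (hy.and bound)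
  have hIcc : Icc (t - δ / 2) (t + δ / 2) ⊆ ball t δ := fun s hs => by
    rw [mem_ball, Real.dist_eq, abs_lt]; constructor <;> linarith [hs.1, hs.2]
  have hzero := eq_zero_of_norm_deriv_le_mul_norm_of_eq_zero (f := fun s => y s - y t) (K := K)
    (fun s hs => (hball s (hIcc hs)).1.sub_const _)
    (fun s hs => (hball s (hIcc hs)).2.trans <|
      mul_le_mul_of_nonneg_left (by simpa [dist_eq_norm] using infDist_le_dist_of_mem ht) hK)
    (t₀ := t) ⟨by linarith, by linarith⟩ (sub_self _)
  filter_upwards [Icc_mem_nhds (by linarith : t - δ / 2 < t) (by linarith : t < t + δ / 2)]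
    with s hs using sub_eq_zero.mp (hzero s hs)

end Gronwall

section Solutions

variable {n : ℕ} {G U : Set (ℝ × (Fin n → ℝ))} {W : ℝ × (Fin n → ℝ) → (Fin n → ℝ)}
  {V : Set (Fin n → ℝ)} {C : ℝ} {y : ℝ → Fin n → ℝ} {a b : ℝ}

theorem IsSolOn.continuousOn (hy : IsSolOn W G y a b) : ContinuousOn y (Ioo a b) :=
  fun s hs => (hy s hs).2.continuousAt.continuousWithinAt

theorem IsSolOn.eventually_eq_of_mem (hy : IsSolOn W G y a b) (hU : IsOpen U)
    (hVU : univ ×ˢ V ∩ G ⊆ U) (hC : 0 ≤ C) (hbound : ∀ p ∈ U, ‖W p‖ ≤ C * infDist p.2 V)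
    {t : ℝ} (ht : t ∈ Ioo a b) (hyt : y t ∈ V) : ∀ᶠ s in 𝓝 t, y s = y t := by
  have hIoo : Ioo a b ∈ 𝓝 t := Ioo_mem_nhds ht.1 ht.2
  have hgraph : ∀ᶠ s in 𝓝 t, (s, y s) ∈ U :=
    (continuousAt_id.prodMk (hy.continuousOn.continuousAt hIoo)).eventually_mem
      (hU.mem_nhds (hVU ⟨⟨mem_univ _, hyt⟩, (hy t ht).1⟩))
  refine eventually_eq_of_norm_deriv_le_mul_infDist (y' := fun s => W (s, y s)) hC ?_ ?_ hyt
  · filter_upwards [hIoo] with s hs using (hy s hs).2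
  · filter_upwards [hgraph] with s hs using hbound _ hs

theorem IsSolOn.eq_of_mem (hy : IsSolOn W G y a b) (hU : IsOpen U)
    (hVU : univ ×ˢ V ∩ G ⊆ U) (hC : 0 ≤ C) (hbound : ∀ p ∈ U, ‖W p‖ ≤ C * infDist p.2 V)
    {t : ℝ} (ht : t ∈ Ioo a b) (hyt : y t ∈ V) : ∀ s ∈ Ioo a b, y s = y t := by
  have : PreconnectedSpace (Ioo a b) := Subtype.preconnectedSpace isPreconnected_Ioo
  let F : Set (Ioo a b) := {s | y s = y t}
  have hclosed : IsClosed F :=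
    isClosed_eq (continuousOn_iff_continuous_domRestrict.mp hy.continuousOn) continuous_const
  have hopen : IsOpen F := isOpen_iff_eventually.mpr fun s hs => by
    have := hy.eventually_eq_of_mem hU hVU hC hbound s.2 (hs.symm ▸ hyt : y s ∈ V)
    filter_upwards [continuous_subtype_val.continuousAt.eventually this] with r hr
    exact hr.trans hs
  intro s hs
  exact eq_univ_iff_forall.mp (IsClopen.eq_univ ⟨hclosed, hopen⟩ ⟨⟨t, ht⟩, rfl⟩) ⟨s, hs⟩

theorem IsSolOn.diff_of_forall_notMem (hy : IsSolOn W G y a b) (hV : ∀ s ∈ Ioo a b, y s ∉ V) :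
    IsSolOn W (G \ univ ×ˢ V) y a b :=
  fun s hs => ⟨⟨(hy s hs).1, fun h => hV s hs h.2⟩, (hy s hs).2⟩

end Solutions

theorem global_uniqueness_extension_general
    {n : ℕ} (G : Set (ℝ × (Fin n → ℝ)))
    (W : ℝ × (Fin n → ℝ) → (Fin n → ℝ))
    (V : Set (Fin n → ℝ))
    (huniq : GlobalUniqueness W (G \ (Set.univ ×ˢ V)))
    (U : Set (ℝ × (Fin n → ℝ))) (hUopen : IsOpen U)
    (hUnbhd : (Set.univ ×ˢ V) ∩ G ⊆ U)
    (C : ℝ) (hC : 0 < C)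
    (hbound : ∀ p ∈ U, ‖W p‖ ≤ C * infDist p.2 V) :
    GlobalUniqueness W G := by
  intro a b y₁ y₂ hy₁ hy₂ t₀ ht₀ heq t ht
  have const_of_mem : ∀ y, IsSolOn W G y a b → y t₀ ∈ V → ∀ s ∈ Ioo a b, y s = y t₀ :=
    fun y hy => hy.eq_of_mem hUopen hUnbhd hC.le hbound ht₀
  by_cases hV₀ : y₁ t₀ ∈ V
  · rw [const_of_mem y₁ hy₁ hV₀ t ht, heq, const_of_mem y₂ hy₂ (heq ▸ hV₀) t ht]
  have avoids : ∀ y, IsSolOn W G y a b → y t₀ ∉ V → IsSolOn W (G \ univ ×ˢ V) y a b :=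
    fun y hy hy₀ => hy.diff_of_forall_notMem fun s hs hys =>
      hy₀ (hy.eq_of_mem hUopen hUnbhd hC.le hbound hs hys t₀ ht₀ ▸ hys)
  exact huniq a b y₁ y₂ (avoids y₁ hy₁ hV₀) (avoids y₂ hy₂ (heq ▸ hV₀)) t₀ ht₀ heq t ht

/-- If `W : G → ℝⁿ` is continuous on the open set `G ⊆ ℝ × ℝⁿ`, `V ⊆ ℝⁿ` is
closed, the ODE `y' = W(t,y)` has global uniqueness in `G \ (ℝ × V)`, and
`|W(t,x)| ≤ C · dist(x, V)` on a neighbourhood `U ⊆ G` of `(ℝ × V) ∩ G`, then the ODE has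
global uniqueness in all of `G`. -/
theorem global_uniqueness_extension
    {n : ℕ} (G : Set (ℝ × (Fin n → ℝ))) (hG : IsOpen G)
    (W : ℝ × (Fin n → ℝ) → (Fin n → ℝ)) (hW : ContinuousOn W G)
    (V : Set (Fin n → ℝ)) (hV : IsClosed V)
    (huniq : GlobalUniqueness W (G \ (Set.univ ×ˢ V)))
    (U : Set (ℝ × (Fin n → ℝ))) (hUopen : IsOpen U) (hUG : U ⊆ G)
    (hUnbhd : (Set.univ ×ˢ V) ∩ G ⊆ U)
    (C : ℝ) (hC : 0 < C)
    (hbound : ∀ p ∈ U, ‖W p‖ ≤ C * infDist p.2 V) :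
    GlobalUniqueness W G :=
  global_uniqueness_extension_general G W V huniq U hUopen hUnbhd C hC hbound
end

section
/- Let f, g : (ℝⁿ, 0) → (ℝ, 0) be C^{r+1} functions, r ∈ ℕ. If (g − f) belongs to the (r+2)-nd power of the Jacobi ideal 𝒥_f C^r(n) (the ideal in the ring of C^r germs generated by the partial derivatives ∂f/∂x₁, …, ∂f/∂xₙ), then there exist a neighbourhood U of 0 and a constant C > 0 such that for every multi-index m with |m| ≤ r, |∂^m(g − f)(x)| ≤ C|∇f(x)|^{r+2−|m|} for all x ∈ U. -/
open Metric Set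

/-- Iterated partial derivative in the coordinate directions given by the list `L`. -/
noncomputable def multiPartial {n : ℕ} (L : List (Fin n)) (f : (Fin n → ℝ) → ℝ) :
    (Fin n → ℝ) → ℝ :=
  L.foldr (fun i g => fun x => fderiv ℝ g x (Pi.single i 1)) f

/-- The list of coordinate directions corresponding to a multi-index `m : Fin n → ℕ`. -/
def multiIndexList {n : ℕ} (m : Fin n → ℕ) : List (Fin n) :=
  (List.finRange n).flatMap fun i => List.replicate (m i) i

/-- `p` belongs (as a germ at `0`) to the `M`-th power of the ideal of `C^k` germs generated
by `q₁, …, q_m`. -/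
def MemIdealPowGerm {n m : ℕ} (k M : ℕ) (q : Fin m → (Fin n → ℝ) → ℝ)
    (p : (Fin n → ℝ) → ℝ) : Prop :=
  ∃ V ∈ nhds (0 : Fin n → ℝ), ∃ c : (Fin M → Fin m) → (Fin n → ℝ) → ℝ,
    (∀ α, ContDiffOn ℝ k (c α) V) ∧
    ∀ x ∈ V, p x = ∑ α : Fin M → Fin m, c α x * ∏ j, q (α j) x

/-! Near `0`, `g - f = ∑ c_α ∏_{j < r+2} ∂_{α j} f` with `C^r` coefficients. Since the partials
of `f` are themselves `C^r`, the product rule turns a directional derivative of such a sum into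
a sum of the same shape with one factor fewer and coefficients one degree less smooth. After
`|m| ≤ r` differentiations the coefficients are still continuous, hence bounded near `0`, and each
of the `r + 2 - |m|` remaining factors is bounded by `‖∇f‖`. -/

open Filter Topology Asymptotics

theorem isBigO_apply_opNorm {α E F : Type*} [NormedAddCommGroup E]
    [NormedSpace ℝ E] [NormedAddCommGroup F] [NormedSpace ℝ F] {l : Filter α}
    (L : α → E →L[ℝ] F) (v : E) : (fun x => L x v) =O[l] fun x => ‖L x‖ :=
  IsBigO.of_bound ‖v‖ (Eventually.of_forall fun x => by
    rw [norm_norm, mul_comm]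
    exact (L x).le_opNorm v)

theorem Set.Finite.exists_pos_forall_isBigOWith {α ι E F : Type*} [Norm E]
    [SeminormedAddCommGroup F] {l : Filter α} {I : Set ι} (hI : I.Finite)
    {u : ι → α → E} {v : ι → α → F} (h : ∀ i ∈ I, u i =O[l] v i) :
    ∃ C > 0, ∀ i ∈ I, IsBigOWith C l (u i) (v i) := by
  choose! C hC hCu using fun i hi => (h i hi).exists_pos
  obtain ⟨M, hM⟩ := (hI.image C).bddAbove
  exact ⟨max M 1, by positivity, fun i hi =>
    (hCu i hi).weaken ((hM (Set.mem_image_of_mem C hi)).trans (le_max_left _ _))⟩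

theorem finite_setOf_sum_le {ι : Type*} [Fintype ι] (r : ℕ) :
    {m : ι → ℕ | ∑ i, m i ≤ r}.Finite :=
  (Set.Finite.pi fun _ => Set.finite_Iic r).subset fun _ hm i _ =>
    (Finset.single_le_sum (fun _ _ => Nat.zero_le _) (Finset.mem_univ i)).trans hm

theorem Fin.prod_univ_erase_eq_prod_succAbove {M : Type*} [CommMonoid M] {s : ℕ}
    (F : Fin (s + 1) → M) (j : Fin (s + 1)) :
    ∏ l ∈ Finset.univ.erase j, F l = ∏ m : Fin s, F (j.succAbove m) := by
  rw [← Finset.compl_singleton, ← Fin.image_succAbove_univ,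
    Finset.prod_image fun a _ b _ hab => Fin.succAbove_right_injective hab]

section Germs

variable {E F : Type*} [NormedAddCommGroup E] [NormedSpace ℝ E] [NormedAddCommGroup F]
  [NormedSpace ℝ F] {ι : Type*}

theorem fderiv_mul_prod_apply {s : ℕ} {c : E → ℝ} {p : Fin (s + 1) → E → ℝ} {x : E}
    (hc : DifferentiableAt ℝ c x) (hp : ∀ j, DifferentiableAt ℝ (p j) x) (v : E) :
    fderiv ℝ (fun y => c y * ∏ j, p j y) x v =
      fderiv ℝ c x v * p 0 x * ∏ m : Fin s, p m.succ x +
        ∑ j, c x * fderiv ℝ (p j) x v * ∏ m : Fin s, p (j.succAbove m) x := by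
  classical
  have hprod := HasFDerivAt.finsetProd (u := Finset.univ) fun j _ => (hp j).hasFDerivAt
  rw [(hc.hasFDerivAt.fun_mul hprod).fderiv]
  simp only [add_apply, smul_apply, sum_apply, smul_eq_mul,
    Fin.prod_univ_erase_eq_prod_succAbove, Fin.prod_univ_succ, Finset.mul_sum]
  rw [add_comm]
  congr 1
  · ring
  · exact Finset.sum_congr rfl fun j _ => by ring

theorem ContDiffOn.eventually_contDiffAt {n : WithTop ℕ∞} {f : E → F} {s : Set E} {a : E}
    (h : ContDiffOn ℝ n f s) (hs : s ∈ 𝓝 a) : ∀ᶠ x in 𝓝 a, ContDiffAt ℝ n f x :=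
  (eventually_mem_nhds_iff.2 hs).mono fun _ hx => h.contDiffAt hx

theorem ContDiffAt.fderiv_apply_const {k : ℕ} {f : E → F} {x : E}
    (h : ContDiffAt ℝ (k + 1 : ℕ) f x) (v : E) :
    ContDiffAt ℝ k (fun y => fderiv ℝ f y v) x :=
  (h.fderiv_right (m := k) (by push_cast; rfl)).clm_apply contDiffAt_const

/-- Unlike in `MemIdealPowGerm`, the monomials `∏_{j < s} q (σ t j)` form an arbitrary finite
family, so that differentiating a representation term by term gives again a representation. -/
def MemIdealPowGermAt (q : ι → E → ℝ) (a : E) (k s : ℕ) (h : E → ℝ) : Prop :=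
  ∃ (T : Type) (_ : Fintype T) (c : T → E → ℝ) (σ : T → Fin s → ι),
    (∀ t, ∀ᶠ x in 𝓝 a, ContDiffAt ℝ k (c t) x) ∧
      h =ᶠ[𝓝 a] fun x => ∑ t, c t x * ∏ j, q (σ t j) x

variable {q : ι → E → ℝ} {a : E} {k s : ℕ} {h : E → ℝ}

theorem MemIdealPowGermAt.fderiv_apply (hh : MemIdealPowGermAt q a (k + 1) (s + 1) h)
    (hq : ∀ i, ∀ᶠ x in 𝓝 a, ContDiffAt ℝ (k + 1 : ℕ) (q i) x) (v : E) :
    MemIdealPowGermAt q a k s (fun x => fderiv ℝ h x v) := by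
  obtain ⟨T, _, c, σ, hc, heq⟩ := hh
  refine ⟨T ⊕ T × Fin (s + 1), inferInstance,
    Sum.elim (fun t x => fderiv ℝ (c t) x v * q (σ t 0) x)
      (fun tj x => c tj.1 x * fderiv ℝ (q (σ tj.1 tj.2)) x v),
    Sum.elim (fun t m => σ t m.succ) (fun tj m => σ tj.1 (tj.2.succAbove m)), ?_, ?_⟩
  · rintro (t | ⟨t, j⟩)
    · filter_upwards [hc t, hq (σ t 0)] with x hcx hqx
      exact (hcx.fderiv_apply_const v).mul (hqx.of_le (by norm_cast; omega))
    · filter_upwards [hc t, hq (σ t j)] with x hcx hqx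
      exact (hcx.of_le (by norm_cast; omega)).mul (hqx.fderiv_apply_const v)
  · filter_upwards [heq.fderiv (𝕜 := ℝ), eventually_all.2 hc,
      eventually_all.2 fun t => eventually_all.2 fun j => hq (σ t j)] with x hx hcx hqx
    have hdiff : ∀ {f : E → ℝ}, ContDiffAt ℝ (k + 1 : ℕ) f x → DifferentiableAt ℝ f x :=
      fun hf => hf.differentiableAt (by norm_cast)
    rw [hx, fderiv_fun_sum fun t _ => ?_]
    · simp only [sum_apply, fderiv_mul_prod_apply (hdiff (hcx _)) (fun j => hdiff (hqx _ j)),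
        Fintype.sum_sum_type, Fintype.sum_prod_type, Finset.sum_add_distrib, Sum.elim_inl,
        Sum.elim_inr]
    · exact (hdiff (hcx t)).mul
        (HasFDerivAt.finsetProd fun j _ => (hdiff (hqx t j)).hasFDerivAt).differentiableAt

theorem MemIdealPowGermAt.isBigO (hh : MemIdealPowGermAt q a k s h) {b : E → ℝ}
    (hq : ∀ i, q i =O[𝓝 a] b) : h =O[𝓝 a] fun x => b x ^ s := by
  obtain ⟨T, _, c, σ, hc, heq⟩ := hh
  refine heq.trans_isBigO (IsBigO.fun_sum fun t _ => ?_)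
  have hct : c t =O[𝓝 a] fun _ => (1 : ℝ) :=
    ((hc t).self_of_nhds.continuousAt.tendsto).isBigO_one ℝ
  simpa using hct.mul (IsBigO.finsetProd (s := .univ) fun j _ => hq (σ t j))

end Germs

section Partials

variable {n : ℕ}

theorem length_multiIndexList (m : Fin n → ℕ) : (multiIndexList m).length = ∑ i, m i := by
  simp [multiIndexList, Fin.sum_univ_def]

theorem MemIdealPowGerm.memIdealPowGermAt {m k M : ℕ} {q : Fin m → (Fin n → ℝ) → ℝ}
    {p : (Fin n → ℝ) → ℝ} (hp : MemIdealPowGerm k M q p) : MemIdealPowGermAt q 0 k M p := by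
  obtain ⟨V, hV, c, hc, heq⟩ := hp
  exact ⟨_, inferInstance, c, id, fun α => (hc α).eventually_contDiffAt hV,
    eventually_of_mem hV heq⟩

theorem MemIdealPowGermAt.multiPartial {ι : Type*} {q : ι → (Fin n → ℝ) → ℝ}
    {a : Fin n → ℝ} {L : List (Fin n)} {k s : ℕ} {h : (Fin n → ℝ) → ℝ}
    (hh : MemIdealPowGermAt q a (k + L.length) (s + L.length) h)
    (hq : ∀ i, ∀ᶠ x in 𝓝 a, ContDiffAt ℝ (k + L.length : ℕ) (q i) x) :
    MemIdealPowGermAt q a k s (multiPartial L h) := by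
  induction L generalizing k s with
  | nil => exact hh
  | cons i L ih =>
    have hk : k + (i :: L).length = k + 1 + L.length := by simp only [List.length_cons]; omega
    have hs : s + (i :: L).length = s + 1 + L.length := by simp only [List.length_cons]; omega
    rw [hk, hs] at hh
    rw [hk] at hq
    exact (ih hh hq).fderiv_apply
      (fun j => (hq j).mono fun x hx => hx.of_le (by norm_cast; omega)) (Pi.single i 1)

end Partials

theorem jacobi_ideal_pow_bound_general
    {n : ℕ} (r : ℕ) (f g : (Fin n → ℝ) → ℝ)
    (U₀ : Set (Fin n → ℝ)) (hU₀ : U₀ ∈ nhds (0 : Fin n → ℝ))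
    (hf : ContDiffOn ℝ (r + 1) f U₀)
    (hmem : MemIdealPowGerm r (r + 2)
      (fun i x => fderiv ℝ f x (Pi.single i 1)) (fun y => g y - f y)) :
    ∃ U ∈ nhds (0 : Fin n → ℝ), ∃ C > (0 : ℝ),
      ∀ m : Fin n → ℕ, (∑ i, m i) ≤ r → ∀ x ∈ U,
        |multiPartial (multiIndexList m) (fun y => g y - f y) x|
          ≤ C * ‖fderiv ℝ f x‖ ^ (r + 2 - (∑ i, m i)) := by
  have hq (i : Fin n) : ∀ᶠ x in 𝓝 0, ContDiffAt ℝ r (fun y => fderiv ℝ f y (Pi.single i 1)) x :=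
    (hf.eventually_contDiffAt hU₀).mono fun x hx =>
      ContDiffAt.fderiv_apply_const (by exact_mod_cast hx) _
  have hbound : ∀ m ∈ {m : Fin n → ℕ | ∑ i, m i ≤ r},
      multiPartial (multiIndexList m) (fun y => g y - f y) =O[𝓝 0]
        fun x => ‖fderiv ℝ f x‖ ^ (r + 2 - ∑ i, m i) := by
    intro m hm
    obtain ⟨k, rfl⟩ := Nat.exists_eq_add_of_le' hm
    have hmem' : MemIdealPowGermAt (fun i x => fderiv ℝ f x (Pi.single i 1)) 0
        (k + (multiIndexList m).length) (k + 2 + (multiIndexList m).length)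
        (fun y => g y - f y) := by
      rw [length_multiIndexList, add_right_comm]
      exact hmem.memIdealPowGermAt
    rw [show k + ∑ i, m i + 2 - ∑ i, m i = k + 2 by omega]
    exact (hmem'.multiPartial (by rwa [length_multiIndexList])).isBigO
      fun i => isBigO_apply_opNorm (fderiv ℝ f) _
  obtain ⟨C, hC, hCm⟩ := (finite_setOf_sum_le r).exists_pos_forall_isBigOWith hbound
  refine ⟨_, (eventually_all_finite (finite_setOf_sum_le r)).2 fun m hm => (hCm m hm).bound,
    C, hC, fun m hm x hx => ?_⟩
  simpa using hx m hm

/-- Corollary 1 of the paper: if `f, g` are `C^{r+1}` near `0`, vanish at `0`,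
and `g − f ∈ (𝒥_f C^r(n))^{r+2}`, then for every multi-index `m` with `|m| ≤ r`,
`|∂^m(g − f)(x)| ≤ C|∇f(x)|^{r+2−|m|}` in a neighbourhood of `0`, for some `C > 0`. -/
theorem jacobi_ideal_pow_bound
    {n : ℕ} (r : ℕ) (hr : 0 < r) (f g : (Fin n → ℝ) → ℝ)
    (hf0 : f 0 = 0) (hg0 : g 0 = 0)
    (U₀ : Set (Fin n → ℝ)) (hU₀ : U₀ ∈ nhds (0 : Fin n → ℝ))
    (hf : ContDiffOn ℝ (r + 1) f U₀) (hg : ContDiffOn ℝ (r + 1) g U₀)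
    (hmem : MemIdealPowGerm r (r + 2)
      (fun i x => fderiv ℝ f x (Pi.single i 1)) (fun y => g y - f y)) :
    ∃ U ∈ nhds (0 : Fin n → ℝ), ∃ C > (0 : ℝ),
      ∀ m : Fin n → ℕ, (∑ i, m i) ≤ r → ∀ x ∈ U,
        |multiPartial (multiIndexList m) (fun y => g y - f y) x|
          ≤ C * ‖fderiv ℝ f x‖ ^ (r + 2 - (∑ i, m i)) :=
  jacobi_ideal_pow_bound_general r f g U₀ hU₀ hf hmem
end

section
/- Let f, g : (ℝⁿ, 0) → (ℝ, 0) be real analytic functions. If f and g are C¹-right equivalent (i.e., f = g ∘ φ near 0 for some C¹ diffeomorphism φ : (ℝⁿ, 0) → (ℝⁿ, 0)), then their Łojasiewicz exponents in the gradient inequality are equal: 𝔏₀(f) = 𝔏₀(g). -/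
open Metric Set Filter

/-- The set of Łojasiewicz gradient exponents of `f` at `0`: exponents `η > 0` such that
`|∇f(x)| ≥ C|f(x)|^η` holds near `0` for some `C > 0`. -/
def lojGradExponents {n : ℕ} (f : (Fin n → ℝ) → ℝ) : Set ℝ :=
  {η : ℝ | 0 < η ∧ ∃ C > (0 : ℝ), ∀ᶠ x in nhds (0 : Fin n → ℝ),
    C * |f x| ^ η ≤ ‖fderiv ℝ f x‖}

/-- The Łojasiewicz exponent of `f` in the gradient inequality at `0`. -/
noncomputable def lojExp {n : ℕ} (f : (Fin n → ℝ) → ℝ) : ℝ :=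
  sInf (lojGradExponents f)

/-!
If `g = f ∘ ψ` with `ψ` a `C¹` diffeomorphism germ, the chain rule gives
`‖dg(φ x)‖ ≤ ‖df(x)‖ ‖dψ(φ x)‖ ≤ M ‖df(x)‖` near `0`, where `M` bounds `‖dψ‖` near `0` by
continuity of `dψ`. So every gradient inequality for `g` yields one for `f` with the same
exponent; by symmetry the two sets of exponents coincide, hence so do their infima.
-/

open Topology

section ChainRule

variable {𝕜 : Type*} [NontriviallyNormedField 𝕜]
  {E F G : Type*} [NormedAddCommGroup E] [NormedSpace 𝕜 E] [NormedAddCommGroup F]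
  [NormedSpace 𝕜 F] [NormedAddCommGroup G] [NormedSpace 𝕜 G]

theorem norm_fderiv_le_of_eventuallyEq_comp {f : E → G} {g : F → G} {φ : E → F} {ψ : F → E}
    {x : E} {y : F} (hφ : DifferentiableAt 𝕜 φ x) (hψ : DifferentiableAt 𝕜 ψ y)
    (hφx : φ x = y) (hψy : ψ y = x) (hf : f =ᶠ[𝓝 x] g ∘ φ) (hg : g =ᶠ[𝓝 y] f ∘ ψ) :
    ‖fderiv 𝕜 g y‖ ≤ ‖fderiv 𝕜 f x‖ * ‖fderiv 𝕜 ψ y‖ := by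
  by_cases hfd : DifferentiableAt 𝕜 f x
  · rw [hg.fderiv_eq, fderiv_comp y (hψy ▸ hfd) hψ, hψy]
    exact ContinuousLinearMap.opNorm_comp_le _ _
  · -- `fderiv` is the junk value `0` off the differentiability locus, and since
    -- `f = g ∘ φ` near `x`, `g` is not differentiable at `y` either.
    have hgd : ¬DifferentiableAt 𝕜 g y := fun hgd =>
      hfd (hf.differentiableAt_iff.2 ((hφx ▸ hgd).comp x hφ))
    rw [fderiv_zero_of_not_differentiableAt hgd, norm_zero]
    positivity

end ChainRule

theorem lojGradExponents_subset_of_rightEquiv {n : ℕ} {f g : (Fin n → ℝ) → ℝ}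
    {φ ψ : (Fin n → ℝ) → (Fin n → ℝ)} {U V : Set (Fin n → ℝ)} (hU : IsOpen U) (hV : IsOpen V)
    (h0U : (0 : Fin n → ℝ) ∈ U) (h0V : (0 : Fin n → ℝ) ∈ V) (hφ0 : φ 0 = 0)
    (hφ : ContDiffOn ℝ 1 φ U) (hψ : ContDiffOn ℝ 1 ψ V) (hφUV : MapsTo φ U V)
    (hψφ : ∀ x ∈ U, ψ (φ x) = x) (hfg : ∀ x ∈ U, f x = g (φ x))
    (hgf : ∀ y ∈ V, g y = f (ψ y)) :
    lojGradExponents g ⊆ lojGradExponents f := by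
  rintro η ⟨hη, C, hC, hgC⟩
  set M := ‖fderiv ℝ ψ 0‖ + 1
  have hφ_tendsto : Tendsto φ (𝓝 0) (𝓝 0) := by
    simpa only [ContinuousAt, hφ0] using hφ.continuousOn.continuousAt (hU.mem_nhds h0U)
  have hψM : ∀ᶠ y in 𝓝 0, ‖fderiv ℝ ψ y‖ < M :=
    ((hψ.contDiffAt (hV.mem_nhds h0V)).continuousAt_fderiv one_ne_zero).norm.eventually_lt_const
      (lt_add_one _)
  refine ⟨hη, C / M, by positivity, ?_⟩
  filter_upwards [hU.mem_nhds h0U, hφ_tendsto.eventually hgC, hφ_tendsto.eventually hψM]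
    with x hx hgx hψx
  have hchain : ‖fderiv ℝ g (φ x)‖ ≤ ‖fderiv ℝ f x‖ * ‖fderiv ℝ ψ (φ x)‖ :=
    norm_fderiv_le_of_eventuallyEq_comp
      ((hφ.contDiffAt (hU.mem_nhds hx)).differentiableAt one_ne_zero)
      ((hψ.contDiffAt (hV.mem_nhds (hφUV hx))).differentiableAt one_ne_zero) rfl (hψφ x hx)
      (eventuallyEq_of_mem (hU.mem_nhds hx) hfg)
      (eventuallyEq_of_mem (hV.mem_nhds (hφUV hx)) hgf)
  rw [div_mul_eq_mul_div, div_le_iff₀ (by positivity)]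
  calc C * |f x| ^ η = C * |g (φ x)| ^ η := by rw [hfg x hx]
    _ ≤ ‖fderiv ℝ g (φ x)‖ := hgx
    _ ≤ ‖fderiv ℝ f x‖ * ‖fderiv ℝ ψ (φ x)‖ := hchain
    _ ≤ ‖fderiv ℝ f x‖ * M := by gcongr

theorem lojExp_eq_of_c1_right_equivalent_general
    {n : ℕ} (f g : (Fin n → ℝ) → ℝ)
    (hequiv : ∃ (φ ψ : (Fin n → ℝ) → (Fin n → ℝ)) (U V : Set (Fin n → ℝ)),
      IsOpen U ∧ IsOpen V ∧ (0 : Fin n → ℝ) ∈ U ∧ (0 : Fin n → ℝ) ∈ V ∧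
      φ 0 = 0 ∧
      ContDiffOn ℝ 1 φ U ∧ ContDiffOn ℝ 1 ψ V ∧
      MapsTo φ U V ∧ MapsTo ψ V U ∧
      (∀ x ∈ U, ψ (φ x) = x) ∧ (∀ y ∈ V, φ (ψ y) = y) ∧
      (∀ x ∈ U, f x = g (φ x))) :
    lojExp f = lojExp g := by
  obtain ⟨φ, ψ, U, V, hU, hV, h0U, h0V, hφ0, hφ, hψ, hφUV, hψVU, hψφ, hφψ, hfg⟩ := hequiv
  have hψ0 : ψ 0 = 0 := by simpa only [hφ0] using hψφ 0 h0U
  have hgf : ∀ y ∈ V, g y = f (ψ y) := fun y hy => by rw [hfg (ψ y) (hψVU hy), hφψ y hy]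
  refine congrArg sInf (Subset.antisymm ?_ ?_)
  · exact lojGradExponents_subset_of_rightEquiv hV hU h0V h0U hψ0 hψ hφ hψVU hφψ hgf hfg
  · exact lojGradExponents_subset_of_rightEquiv hU hV h0U h0V hφ0 hφ hψ hφUV hψφ hfg hgf

/-- Proposition 1 of the paper: if `f, g` are real analytic germs at `0`
vanishing at `0` and `C¹`-right equivalent, then `𝔏₀(f) = 𝔏₀(g)`. -/
theorem lojExp_eq_of_c1_right_equivalent
    {n : ℕ} (f g : (Fin n → ℝ) → ℝ)
    (hf0 : f 0 = 0) (hg0 : g 0 = 0)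
    (hf : AnalyticAt ℝ f 0) (hg : AnalyticAt ℝ g 0)
    (hequiv : ∃ (φ ψ : (Fin n → ℝ) → (Fin n → ℝ)) (U V : Set (Fin n → ℝ)),
      IsOpen U ∧ IsOpen V ∧ (0 : Fin n → ℝ) ∈ U ∧ (0 : Fin n → ℝ) ∈ V ∧
      φ 0 = 0 ∧
      ContDiffOn ℝ 1 φ U ∧ ContDiffOn ℝ 1 ψ V ∧
      MapsTo φ U V ∧ MapsTo ψ V U ∧
      (∀ x ∈ U, ψ (φ x) = x) ∧ (∀ y ∈ V, φ (ψ y) = y) ∧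
      (∀ x ∈ U, f x = g (φ x))) :
    lojExp f = lojExp g :=
  lojExp_eq_of_c1_right_equivalent_general f g hequiv
end

section
/- Let Z ⊆ ℝⁿ be closed, G ⊆ ℝ × ℝⁿ open, r ∈ ℕ, and let X : G → ℝ be a function vanishing on G ∩ (ℝ × Z), of class C^r on G \ (ℝ × Z), and satisfying |∂^α X(ξ, x)| ≤ A · dist(x, Z)^{r+1−|α|} for all (ξ, x) ∈ G \ (ℝ × Z) and all multi-indices α ∈ ℕ₀^{n+1} with |α| ≤ r, for some constant A > 0. Then X is of class C^r on all of G and all partial derivatives ∂^α X with |α| ≤ r vanish on G ∩ (ℝ × Z). -/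
/-!
Near a point `p` of a closed set `S` (here `ℝ × Z`), a function `g` vanishing on `S` with
`|g| ≤ A · dist(·, S)^e` satisfies `g = O(‖· - p‖^e)`, since `dist(q, S) ≤ ‖q - p‖`. For `e ≥ 2`
this makes `g` differentiable at `p` with derivative `0`; for `e ≥ 1` it makes `g` continuous
at `p`. Applied to `∂^α X` with `e = r + 1 - |α|`, induction on `|α|` shows that the partial
derivatives vanish on `S`, and induction on `r`, using that `∂_i X` satisfies the same
hypotheses with `r - 1`, shows that `X` is `C^r` on `G`.
-/

open Metric Set

open Asymptotics Filter Topology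

section Flat

variable {E : Type*} [NormedAddCommGroup E] {S G : Set E} {g : E → ℝ} {A : ℝ} {e : ℕ} {p : E}

theorem isBigO_norm_sub_pow_of_abs_le_infDist_pow (hG : G ∈ 𝓝 p) (hp : p ∈ S)
    (hzero : ∀ q ∈ G ∩ S, g q = 0) (hbound : ∀ q ∈ G \ S, |g q| ≤ A * infDist q S ^ e) :
    g =O[𝓝 p] fun q => ‖q - p‖ ^ e := by
  refine IsBigO.of_bound |A| ?_
  filter_upwards [hG] with q hq
  by_cases hqS : q ∈ S
  · simp only [hzero q ⟨hq, hqS⟩, norm_zero]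
    positivity
  · calc ‖g q‖ = |g q| := Real.norm_eq_abs _
      _ ≤ A * infDist q S ^ e := hbound q ⟨hq, hqS⟩
      _ ≤ |A| * infDist q S ^ e :=
        mul_le_mul_of_nonneg_right (le_abs_self A) (pow_nonneg infDist_nonneg e)
      _ ≤ |A| * ‖‖q - p‖ ^ e‖ := by
        rw [norm_pow, norm_norm, ← dist_eq_norm]
        gcongr
        · exact infDist_nonneg
        · exact infDist_le_dist_of_mem hp

theorem continuousAt_of_abs_le_infDist_pow (he : 1 ≤ e) (hG : G ∈ 𝓝 p) (hp : p ∈ S)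
    (hzero : ∀ q ∈ G ∩ S, g q = 0) (hbound : ∀ q ∈ G \ S, |g q| ≤ A * infDist q S ^ e) :
    ContinuousAt g p := by
  rw [ContinuousAt, hzero p ⟨mem_of_mem_nhds hG, hp⟩]
  refine (isBigO_norm_sub_pow_of_abs_le_infDist_pow hG hp hzero hbound).trans_tendsto ?_
  have hcont : Continuous fun q => ‖q - p‖ ^ e := by fun_prop
  simpa [zero_pow (Nat.one_le_iff_ne_zero.mp he)] using hcont.tendsto p

variable [NormedSpace ℝ E]

theorem hasFDerivAt_zero_of_abs_le_infDist_pow (he : 2 ≤ e) (hG : G ∈ 𝓝 p) (hp : p ∈ S)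
    (hzero : ∀ q ∈ G ∩ S, g q = 0) (hbound : ∀ q ∈ G \ S, |g q| ≤ A * infDist q S ^ e) :
    HasFDerivAt g (0 : E →L[ℝ] ℝ) p :=
  (isBigO_norm_sub_pow_of_abs_le_infDist_pow hG hp hzero hbound).hasFDerivAt he

end Flat

theorem infDist_le_infDist_preimage {α β : Type*} [PseudoMetricSpace α] [PseudoMetricSpace β]
    {φ : α → β} (hφ : LipschitzWith 1 φ) (hsurj : Function.Surjective φ) (x : α) (Z : Set β) :
    infDist (φ x) Z ≤ infDist x (φ ⁻¹' Z) := by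
  rcases Z.eq_empty_or_nonempty with rfl | hZ
  · simp only [infDist_empty, preimage_empty, le_refl]
  · refine (le_infDist (hZ.preimage hsurj)).mpr fun y hy => ?_
    calc infDist (φ x) Z ≤ dist (φ x) (φ y) := infDist_le_dist_of_mem hy
      _ ≤ dist x y := by simpa using hφ.dist_le_mul x y

theorem Fin.lipschitzWith_one_tail {n : ℕ} {α : Fin (n + 1) → Type*}
    [∀ i, PseudoMetricSpace (α i)] : LipschitzWith 1 (Fin.tail : (∀ i, α i) → _) :=
  .mk_one fun p q => (dist_pi_le_iff dist_nonneg).mpr fun i => dist_le_pi_dist p q i.succ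

theorem Fin.tail_surjective {n : ℕ} {α : Fin (n + 1) → Type*} [Nonempty (α 0)] :
    Function.Surjective (Fin.tail : (∀ i, α i) → _) :=
  fun z => ⟨Fin.cons (Classical.arbitrary _) z, rfl⟩

section MultiPartial

variable {m : ℕ}

theorem multiPartial_append (L₁ L₂ : List (Fin m)) (f : (Fin m → ℝ) → ℝ) :
    multiPartial (L₁ ++ L₂) f = multiPartial L₁ (multiPartial L₂ f) := by
  simp only [multiPartial, List.foldr_append]

theorem fderiv_apply_eq_sum_multiPartial (f : (Fin m → ℝ) → ℝ) (x y : Fin m → ℝ) :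
    fderiv ℝ f x y = ∑ i, y i * multiPartial [i] f x := by
  conv_lhs => rw [pi_eq_sum_univ' y]
  simp [multiPartial]

theorem ContDiffOn.multiPartial_singleton {k : ℕ} {s : Set (Fin m → ℝ)} {f : (Fin m → ℝ) → ℝ}
    (hs : IsOpen s) (hf : ContDiffOn ℝ (k + 1) f s) (i : Fin m) :
    ContDiffOn ℝ k (multiPartial [i] f) s :=
  ((contDiffOn_succ_iff_fderiv_of_isOpen hs).mp hf).2.2.clm_apply contDiffOn_const

end MultiPartial

def IsFlatOn {m : ℕ} (S G : Set (Fin m → ℝ)) (A : ℝ) (k : ℕ) (f : (Fin m → ℝ) → ℝ) : Prop :=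
  (∀ p ∈ G ∩ S, f p = 0) ∧
    ∀ L : List (Fin m), L.length ≤ k →
      ∀ p ∈ G \ S, |multiPartial L f p| ≤ A * infDist p S ^ (k + 1 - L.length)

namespace IsFlatOn

variable {m k : ℕ} {S G : Set (Fin m → ℝ)} {A : ℝ} {f : (Fin m → ℝ) → ℝ}

theorem multiPartial_eq_zero (hf : IsFlatOn S G A k f) (hG : IsOpen G) :
    ∀ L : List (Fin m), L.length ≤ k → ∀ p ∈ G ∩ S, multiPartial L f p = 0
  | [], _, p, hp => hf.1 p hp
  | i :: L, hL, p, hp => by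
    have hL' : L.length ≤ k := (Nat.le_succ _).trans hL
    have hderiv : HasFDerivAt (multiPartial L f) (0 : (Fin m → ℝ) →L[ℝ] ℝ) p :=
      hasFDerivAt_zero_of_abs_le_infDist_pow (by simp at hL; omega) (hG.mem_nhds hp.1) hp.2
        (hf.multiPartial_eq_zero hG L hL') (hf.2 L hL')
    show fderiv ℝ (multiPartial L f) p (Pi.single i 1) = 0
    rw [hderiv.fderiv]
    rfl

theorem multiPartial_singleton (hf : IsFlatOn S G A (k + 1) f) (hG : IsOpen G) (i : Fin m) :
    IsFlatOn S G A k (multiPartial [i] f) := by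
  refine ⟨hf.multiPartial_eq_zero hG [i] (by simp), fun L hL p hp => ?_⟩
  have hbound := hf.2 (L ++ [i]) (by simpa using hL) p hp
  rw [multiPartial_append] at hbound
  convert hbound using 3
  simp only [List.length_append, List.length_singleton]
  omega

theorem continuousOn (hf : IsFlatOn S G A k f) (hS : IsClosed S) (hG : IsOpen G)
    (hcont : ContinuousOn f (G \ S)) : ContinuousOn f G := by
  intro p hp
  refine ContinuousAt.continuousWithinAt ?_
  by_cases hpS : p ∈ S
  · exact continuousAt_of_abs_le_infDist_pow (Nat.le_add_left 1 k) (hG.mem_nhds hp) hpS hf.1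
      (hf.2 [] (Nat.zero_le k))
  · exact hcont.continuousAt ((hG.sdiff hS).mem_nhds ⟨hp, hpS⟩)

theorem differentiableOn (hf : IsFlatOn S G A (k + 1) f) (hS : IsClosed S) (hG : IsOpen G)
    (hdiff : DifferentiableOn ℝ f (G \ S)) : DifferentiableOn ℝ f G := by
  intro p hp
  refine DifferentiableAt.differentiableWithinAt ?_
  by_cases hpS : p ∈ S
  · exact (hasFDerivAt_zero_of_abs_le_infDist_pow (Nat.le_add_left 2 k) (hG.mem_nhds hp) hpS
      hf.1 (hf.2 [] (Nat.zero_le _))).differentiableAt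
  · exact hdiff.differentiableAt ((hG.sdiff hS).mem_nhds ⟨hp, hpS⟩)

theorem contDiffOn (hf : IsFlatOn S G A k f) (hS : IsClosed S) (hG : IsOpen G)
    (hsmooth : ContDiffOn ℝ k f (G \ S)) : ContDiffOn ℝ k f G := by
  induction k generalizing f with
  | zero =>
    simp only [CharP.cast_eq_zero, contDiffOn_zero] at hsmooth ⊢
    exact hf.continuousOn hS hG hsmooth
  | succ k ih =>
    push_cast at hsmooth ⊢
    have hpartial (i : Fin m) : ContDiffOn ℝ k (multiPartial [i] f) G :=
      ih (hf.multiPartial_singleton hG i) (hsmooth.multiPartial_singleton (hG.sdiff hS) i)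
    refine (contDiffOn_succ_iff_fderiv_of_isOpen hG).mpr
      ⟨hf.differentiableOn hS hG (hsmooth.differentiableOn (by simp)), by simp, ?_⟩
    refine contDiffOn_clm_apply.mpr fun y => ?_
    simp only [fderiv_apply_eq_sum_multiPartial]
    exact ContDiffOn.sum fun i _ => contDiffOn_const.mul (hpartial i)

end IsFlatOn

/-- Steps 1–3 of the proof of Theorem 2: we identify `ℝ × ℝⁿ` with
`Fin (n+1) → ℝ`, a point `p` corresponding to `(p 0, p ∘ Fin.succ)`. If `Z ⊆ ℝⁿ` is closed,
`G ⊆ ℝ × ℝⁿ` is open, `X : G → ℝ` vanishes on `G ∩ (ℝ × Z)`, is `C^r` off `ℝ × Z`, and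
`|∂^α X(ξ, x)| ≤ A · dist(x, Z)^{r+1−|α|}` on `G \ (ℝ × Z)` for all `|α| ≤ r`, then `X` is
`C^r` on `G` and all `∂^α X` with `|α| ≤ r` vanish on `G ∩ (ℝ × Z)`. -/
theorem cr_extension_across_zero_set
    {n : ℕ} (r : ℕ)
    (Z : Set (Fin n → ℝ)) (hZ : IsClosed Z)
    (G : Set (Fin (n + 1) → ℝ)) (hG : IsOpen G)
    (X : (Fin (n + 1) → ℝ) → ℝ)
    (hvanish : ∀ p ∈ G, (fun i => p (Fin.succ i)) ∈ Z → X p = 0)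
    (hsmooth : ContDiffOn ℝ r X (G \ {p | (fun i => p (Fin.succ i)) ∈ Z}))
    (A : ℝ) (hA : 0 < A)
    (hbound : ∀ L : List (Fin (n + 1)), L.length ≤ r →
      ∀ p ∈ G \ {p | (fun i => p (Fin.succ i)) ∈ Z},
        |multiPartial L X p|
          ≤ A * infDist (fun i => p (Fin.succ i)) Z ^ (r + 1 - L.length)) :
    ContDiffOn ℝ r X G ∧
      ∀ L : List (Fin (n + 1)), L.length ≤ r →
        ∀ p ∈ G, (fun i => p (Fin.succ i)) ∈ Z → multiPartial L X p = 0 := by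
  have hflat : IsFlatOn (Fin.tail ⁻¹' Z) G A r X := by
    refine ⟨fun p hp => hvanish p hp.1 hp.2, fun L hL p hp => (hbound L hL p hp).trans ?_⟩
    have hdist := infDist_le_infDist_preimage Fin.lipschitzWith_one_tail Fin.tail_surjective p Z
    exact mul_le_mul_of_nonneg_left (pow_le_pow_left₀ infDist_nonneg hdist _) hA.le
  have hS : IsClosed (Fin.tail ⁻¹' Z : Set (Fin (n + 1) → ℝ)) :=
    hZ.preimage Fin.lipschitzWith_one_tail.continuous
  exact ⟨hflat.contDiffOn hS hG hsmooth,
    fun L hL p hp hpZ => hflat.multiPartial_eq_zero hG L hL p ⟨hp, hpZ⟩⟩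
end
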